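/- The subspace of Sym^3(S^1) consisting of unordered triples with a repeated entry, i.e. {{λ, λ, μ} : λ, μ ∈ S^1}, is homeomorphic to the torus S^1 × S^1, via {λ, λ, μ} ↦ (λ, μ) where λ is the repeated element. -/

import Mathlib

open CategoryTheory

/-- The singular chain complex of a topological space with coefficients in `R`. -/
noncomputable def singularChainComplex (R : Type) [CommRing R] :
    TopCat ⥤ ChainComplex (ModuleCat R) ℕ :=
  TopCat.toSSet ⋙ ((SimplicialObject.whiskering _ _).obj (ModuleCat.free R)) ⋙
    AlgebraicTopology.alternatingFaceMapComplex _

/-- Singular homology with coefficients in `R`, as a functor `TopCat ⥤ ModuleCat R`. -/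
noncomputable def singularHomology (R : Type) [CommRing R] (n : ℕ) :
    TopCat ⥤ ModuleCat R :=
  singularChainComplex R ⋙ HomologicalComplex.homologyFunctor _ _ n

/-- The `n`-th Betti number of a topological space with coefficients in `R`. -/
noncomputable def bettiNumber (R : Type) [CommRing R] (n : ℕ) (X : Type)
    [TopologicalSpace X] : ℕ :=
  Module.finrank R ((singularHomology R n).obj (TopCat.of X))

/-- The setoid on `Fin n → X` identifying tuples up to permutation. -/
def symmSetoid (X : Type) (n : ℕ) : Setoid (Fin n → X) where
  r x y := ∃ e : Equiv.Perm (Fin n), x ∘ e = y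
  iseqv := by
    refine ⟨fun x => ⟨Equiv.refl _, rfl⟩, ?_, ?_⟩
    · rintro x y ⟨e, rfl⟩
      exact ⟨e.symm, by ext i; simp⟩
    · rintro x y z ⟨e, rfl⟩ ⟨f, rfl⟩
      exact ⟨f.trans e, by ext i; simp⟩

/-- The `n`-th symmetric product of a topological space, with the quotient topology. -/
def SymProd (X : Type) [TopologicalSpace X] (n : ℕ) : Type :=
  Quotient (symmSetoid X n)

instance (X : Type) [TopologicalSpace X] (n : ℕ) : TopologicalSpace (SymProd X n) :=
  instTopologicalSpaceQuotient

/-- The subspace of `Sym³(S¹)` of unordered triples with a repeated entry. -/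
def repeatedTriples : Set (SymProd Circle 3) :=
  {q | ∃ l m : Circle, q = Quotient.mk (symmSetoid Circle 3) ![l, l, m]}

/-!
The map `(λ, μ) ↦ {λ, λ, μ}` from the torus is continuous, and injective because the multiset
of entries determines `λ` as its entry of multiplicity at least two. Its source is compact, and
`Symⁿ X` is Hausdorff for Hausdorff `X`: the quotient map is open, since the saturation of an open
set is a union of its images under the finitely many coordinate permutations, and the relation
`{(x, y) | mk x = mk y}` is the finite union of the closed graphs of these permutations.
So it is a homeomorphism onto its image, which is `repeatedTriples`.
-/

namespace SymProd

variable {X : Type} [TopologicalSpace X] {n : ℕ}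

abbrev mk : (Fin n → X) → SymProd X n := Quotient.mk (symmSetoid X n)

theorem mk_eq_mk_iff {x y : Fin n → X} : mk x = mk y ↔ ∃ e : Equiv.Perm (Fin n), x ∘ e = y :=
  Quotient.eq

theorem continuous_comp_perm (e : Equiv.Perm (Fin n)) :
    Continuous fun x : Fin n → X => x ∘ e :=
  continuous_pi fun i => continuous_apply (e i)

theorem preimage_image_mk (U : Set (Fin n → X)) :
    mk ⁻¹' (mk '' U) = ⋃ e : Equiv.Perm (Fin n), (fun x : Fin n → X => x ∘ e) ⁻¹' U := by
  ext x
  simp only [Set.mem_preimage, Set.mem_image, Set.mem_iUnion, mk_eq_mk_iff]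
  constructor
  · rintro ⟨u, hu, e, rfl⟩
    exact ⟨e.symm, by simpa [Function.comp_def] using hu⟩
  · rintro ⟨e, he⟩
    exact ⟨x ∘ e, he, e.symm, by ext; simp⟩

theorem isOpenQuotientMap_mk : IsOpenQuotientMap (mk : (Fin n → X) → SymProd X n) := by
  refine ⟨Quotient.mk_surjective, continuous_quotient_mk', fun U hU => ?_⟩
  change IsOpen (mk ⁻¹' (mk '' U))
  rw [preimage_image_mk]
  exact isOpen_iUnion fun e => hU.preimage (continuous_comp_perm e)

theorem isClosed_setOf_mk_eq_mk [T2Space X] :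
    IsClosed {p : (Fin n → X) × (Fin n → X) | mk p.1 = mk p.2} := by
  simp only [mk_eq_mk_iff, Set.ofPred_exists]
  exact isClosed_iUnion_of_finite fun e =>
    isClosed_eq ((continuous_comp_perm e).comp continuous_fst) continuous_snd

instance [T2Space X] : T2Space (SymProd X n) :=
  (t2Space_iff_of_isOpenQuotientMap isOpenQuotientMap_mk).mpr isClosed_setOf_mk_eq_mk

def toMultiset : SymProd X n → Multiset X :=
  Quotient.lift (fun x => Finset.univ.val.map x) fun x y ⟨e, he⟩ => by
    rw [← he, ← Multiset.map_map, Multiset.map_univ_val_equiv]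

theorem toMultiset_mk_three (a b c : X) : toMultiset (mk ![a, b, c]) = {a, b, c} :=
  rfl

end SymProd

theorem Multiset.eq_and_eq_of_triple_eq {α : Type*} {a b c d : α}
    (h : ({a, a, b} : Multiset α) = {c, c, d}) : a = c ∧ b = d := by
  classical
  have hac : a = c := by
    by_contra hac
    have := congrArg (Multiset.count a) h
    simp only [Multiset.insert_eq_cons, Multiset.count_cons_self, Multiset.count_cons_of_ne hac,
      Multiset.count_singleton] at this
    split_ifs at this <;> omega
  subst hac
  simpa [Multiset.insert_eq_cons] using h

section RepeatedTriple

variable {X : Type} [TopologicalSpace X]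

def repeatedTriple (p : X × X) : SymProd X 3 :=
  SymProd.mk ![p.1, p.1, p.2]

theorem continuous_repeatedTriple : Continuous (repeatedTriple (X := X)) :=
  continuous_quotient_mk'.comp <| continuous_pi fun i => by fin_cases i <;> fun_prop

theorem repeatedTriple_injective : Function.Injective (repeatedTriple (X := X)) := by
  rintro ⟨a, b⟩ ⟨c, d⟩ h
  have := congrArg SymProd.toMultiset h
  simp only [repeatedTriple, SymProd.toMultiset_mk_three] at this
  obtain ⟨rfl, rfl⟩ := Multiset.eq_and_eq_of_triple_eq this
  rfl

end RepeatedTriple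

/-- The subspace of `Sym³(S¹)` of unordered triples with a repeated entry is
homeomorphic to the torus `S¹ × S¹`, via `{λ, λ, μ} ↦ (λ, μ)` with `λ` the repeated
element (stated via the inverse homeomorphism `(λ, μ) ↦ {λ, λ, μ}`). -/
theorem repeatedTriples_homeomorph_torus :
    ∃ h : Circle × Circle ≃ₜ repeatedTriples,
      ∀ l m : Circle,
        (h (l, m) : SymProd Circle 3) = Quotient.mk (symmSetoid Circle 3) ![l, l, m] := by
  have hrange : Set.range repeatedTriple = repeatedTriples := by
    ext q
    simp [repeatedTriples, repeatedTriple, eq_comm]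
  let e : Circle × Circle ≃ Set.range repeatedTriple := Equiv.ofInjective _ repeatedTriple_injective
  have he : Continuous e := continuous_repeatedTriple.subtype_mk _
  exact ⟨he.homeoOfEquivCompactToT2.trans (Homeomorph.setCongr hrange), fun _ _ => rfl⟩
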